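/- Let X be a smooth complex Banach space and T a self-adjoint operator on X. Then for every n ∈ ℕ and x ∈ X, ‖Tⁿx‖² = J(x)(T^{2n}x); consequently μ(Tⁿ)² = c(T^{2n}), and if X is reflexive, c(T^{2n}) = μ(T^{2n}). -/

import Mathlib

/-- Self-adjointness on a smooth Banach space: `T' ∘ J = J ∘ T`. -/
def IsSelfAdj {X : Type*} [NormedAddCommGroup X] [NormedSpace ℂ X]
    (J : X → (X →L[ℂ] ℂ)) (T : X →L[ℂ] X) : Prop :=
  ∀ x : X, J (T x) = (J x).comp T

/-- The minimum modulus μ(T) = inf{‖Tx‖ : ‖x‖ = 1}. -/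
noncomputable def minMod {X : Type*} [NormedAddCommGroup X] [NormedSpace ℂ X]
    (T : X →L[ℂ] X) : ℝ :=
  sInf {r : ℝ | ∃ x : X, ‖x‖ = 1 ∧ r = ‖T x‖}

/-- The Crawford number c(T) = inf{ |J(x)(Tx)| : ‖x‖ = 1 }. -/
noncomputable def crawford {X : Type*} [NormedAddCommGroup X] [NormedSpace ℂ X]
    (J : X → (X →L[ℂ] ℂ)) (T : X →L[ℂ] X) : ℝ :=
  sInf {r : ℝ | ∃ x : X, ‖x‖ = 1 ∧ r = ‖J x (T x)‖}

section Aux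

variable {X : Type*} [NormedAddCommGroup X] [NormedSpace ℂ X]

lemma minModSet_bddBelow (T : X →L[ℂ] X) :
    BddBelow {r : ℝ | ∃ x : X, ‖x‖ = 1 ∧ r = ‖T x‖} :=
  ⟨0, by rintro r ⟨x, -, rfl⟩; exact norm_nonneg _⟩

lemma minMod_nonneg (T : X →L[ℂ] X) : 0 ≤ minMod T :=
  Real.sInf_nonneg (by rintro r ⟨x, -, rfl⟩; exact norm_nonneg _)

lemma minMod_le (T : X →L[ℂ] X) {x : X} (hx : ‖x‖ = 1) : minMod T ≤ ‖T x‖ :=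
  csInf_le (minModSet_bddBelow T) ⟨x, hx, rfl⟩

lemma exists_unit_vector [Nontrivial X] : ∃ x : X, ‖x‖ = 1 := by
  obtain ⟨x, hx⟩ := NormedSpace.sphere_nonempty_rclike ℂ (E := X) (zero_le_one)
  exact ⟨x, by simpa [mem_sphere_zero_iff_norm] using hx⟩

lemma le_minMod [Nontrivial X] (T : X →L[ℂ] X) {c : ℝ}
    (h : ∀ x : X, ‖x‖ = 1 → c ≤ ‖T x‖) : c ≤ minMod T := by
  obtain ⟨x₀, hx₀⟩ := exists_unit_vector (X := X)
  exact le_csInf ⟨‖T x₀‖, x₀, hx₀, rfl⟩ (by rintro r ⟨x, hx, rfl⟩; exact h x hx)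

lemma minMod_mul_le (T : X →L[ℂ] X) (x : X) : minMod T * ‖x‖ ≤ ‖T x‖ := by
  rcases eq_or_ne x 0 with rfl | hx
  · simp
  · have hxn : (0:ℝ) < ‖x‖ := norm_pos_iff.mpr hx
    have h1 : ‖((‖x‖⁻¹ : ℝ) : ℂ) • x‖ = 1 := by
      rw [norm_smul, Complex.norm_real, Real.norm_eq_abs,
        abs_of_nonneg (inv_nonneg.mpr hxn.le), inv_mul_cancel₀ hxn.ne']
    have h2 := minMod_le T h1
    rw [map_smul, norm_smul, Complex.norm_real, Real.norm_eq_abs,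
      abs_of_nonneg (inv_nonneg.mpr hxn.le)] at h2
    calc minMod T * ‖x‖ ≤ (‖x‖⁻¹ * ‖T x‖) * ‖x‖ := by
          exact mul_le_mul_of_nonneg_right h2 hxn.le
      _ = ‖T x‖ := by field_simp
      
lemma minMod_of_not_nontrivial (h : ¬ Nontrivial X) (T : X →L[ℂ] X) : minMod T = 0 := by
  have hempty : {r : ℝ | ∃ x : X, ‖x‖ = 1 ∧ r = ‖T x‖} = ∅ := by
    ext r
    simp only [Set.mem_setOf_eq, Set.mem_empty_iff_false, iff_false]
    rintro ⟨x, hx, -⟩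
    exact h ⟨⟨x, 0, fun hx0 => by simp [hx0] at hx⟩⟩
  rw [minMod, hempty, Real.sInf_empty]

lemma isSelfAdj_pow {J : X → (X →L[ℂ] ℂ)} {T : X →L[ℂ] X} (hT : IsSelfAdj J T) :
    ∀ n : ℕ, IsSelfAdj J (T ^ n)
  | 0 => by
      intro x
      ext y
      simp [ContinuousLinearMap.one_apply]
  | (n+1) => by
      intro x
      have IH := isSelfAdj_pow hT n
      ext y
      have h1 : (T ^ (n+1)) x = (T ^ n) (T x) := by
        rw [pow_succ, ContinuousLinearMap.mul_apply]
      have h2 : (T ^ (n+1)) y = T ((T ^ n) y) := by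
        rw [pow_succ', ContinuousLinearMap.mul_apply]
      calc J ((T ^ (n+1)) x) y = J ((T ^ n) (T x)) y := by rw [h1]
        _ = J (T x) ((T ^ n) y) := by rw [IH (T x)]; rfl
        _ = J x (T ((T ^ n) y)) := by rw [hT x]; rfl
        _ = J x ((T ^ (n+1)) y) := by rw [h2]

lemma key_identity {J : X → (X →L[ℂ] ℂ)} (hJx : ∀ x : X, J x x = (‖x‖ : ℂ) ^ 2)
    {T : X →L[ℂ] X} (hT : IsSelfAdj J T) (n : ℕ) (x : X) :
    J x ((T ^ (2 * n)) x) = (‖(T ^ n) x‖ : ℂ) ^ 2 := by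
  have h2 : (T ^ (2 * n)) x = (T ^ n) ((T ^ n) x) := by
    rw [two_mul, pow_add, ContinuousLinearMap.mul_apply]
  calc J x ((T ^ (2 * n)) x) = J x ((T ^ n) ((T ^ n) x)) := by rw [h2]
    _ = J ((T ^ n) x) ((T ^ n) x) := by rw [isSelfAdj_pow hT n x]; rfl
    _ = (‖(T ^ n) x‖ : ℂ) ^ 2 := hJx _

lemma minMod_eq_inv_norm [Nontrivial X] (B C : X →L[ℂ] X)
    (h1 : ∀ z, C (B z) = z) (h2 : ∀ z, B (C z) = z) : minMod B = ‖C‖⁻¹ := by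
  have hCpos : 0 < ‖C‖ := by
    obtain ⟨u, hu⟩ := exists_unit_vector (X := X)
    have hu0 : u ≠ 0 := fun h => by simp [h] at hu
    have hCu : C u ≠ 0 := fun h => hu0 (by rw [← h2 u, h, map_zero])
    have : 0 < ‖C u‖ := norm_pos_iff.mpr hCu
    have hle := C.le_opNorm u
    rw [hu, mul_one] at hle
    linarith
  have hge : ‖C‖⁻¹ ≤ minMod B := by
    apply le_minMod
    intro x hx
    have h3 : ‖C (B x)‖ = 1 := by rw [h1, hx]
    have h4 := C.le_opNorm (B x)
    rw [h3] at h4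
    have h5 : ‖C‖⁻¹ * ‖C‖ = 1 := inv_mul_cancel₀ hCpos.ne'
    nlinarith [inv_nonneg.mpr hCpos.le, norm_nonneg (B x)]
  have hμpos : 0 < minMod B := lt_of_lt_of_le (inv_pos.mpr hCpos) hge
  have hCle : ‖C‖ ≤ (minMod B)⁻¹ := by
    apply ContinuousLinearMap.opNorm_le_bound _ (inv_nonneg.mpr hμpos.le)
    intro u
    rcases eq_or_ne u 0 with rfl | hu0
    · simp
    · have hCu : C u ≠ 0 := fun h => hu0 (by rw [← h2 u, h, map_zero])
      have hCun : (0:ℝ) < ‖C u‖ := norm_pos_iff.mpr hCu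
      have hz : ‖((‖C u‖⁻¹ : ℝ) : ℂ) • (C u)‖ = 1 := by
        rw [norm_smul, Complex.norm_real, Real.norm_eq_abs,
          abs_of_nonneg (inv_nonneg.mpr hCun.le), inv_mul_cancel₀ hCun.ne']
      have h6 := minMod_le B hz
      have h7 : ‖B (((‖C u‖⁻¹ : ℝ) : ℂ) • (C u))‖ = ‖C u‖⁻¹ * ‖u‖ := by
        rw [map_smul, h2, norm_smul, Complex.norm_real, Real.norm_eq_abs,
          abs_of_nonneg (inv_nonneg.mpr hCun.le)]
      rw [h7] at h6
      have h8 : minMod B * ‖C u‖ ≤ ‖u‖ := by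
        have := mul_le_mul_of_nonneg_right h6 hCun.le
        calc minMod B * ‖C u‖ ≤ (‖C u‖⁻¹ * ‖u‖) * ‖C u‖ := this
          _ = ‖u‖ := by field_simp
      calc ‖C u‖ = (minMod B)⁻¹ * (minMod B * ‖C u‖) := by field_simp
        _ ≤ (minMod B)⁻¹ * ‖u‖ :=
            mul_le_mul_of_nonneg_left h8 (inv_nonneg.mpr hμpos.le)
  have hle : minMod B ≤ ‖C‖⁻¹ := by
    have h9 : minMod B * ‖C‖ ≤ 1 := by
      have := mul_le_mul_of_nonneg_left hCle hμpos.le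
      rwa [mul_inv_cancel₀ hμpos.ne'] at this
    calc minMod B = (minMod B * ‖C‖) * ‖C‖⁻¹ := by field_simp
      _ ≤ 1 * ‖C‖⁻¹ := mul_le_mul_of_nonneg_right h9 (inv_nonneg.mpr hCpos.le)
      _ = ‖C‖⁻¹ := one_mul _
  exact le_antisymm hle hge

/-- Main lemma: for a self-adjoint `S` on a reflexive smooth space,
`μ(S)² = μ(S²)`. -/
lemma minMod_sq_eq [CompleteSpace X] (J : X → (X →L[ℂ] ℂ))
    (hJnorm : ∀ x : X, ‖J x‖ = ‖x‖)
    (hJx : ∀ x : X, J x x = (‖x‖ : ℂ) ^ 2)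
    (hsurj : Function.Surjective J)
    (S : X →L[ℂ] X) (hS : IsSelfAdj J S) :
    minMod S ^ 2 = minMod (S * S) := by
  by_cases hnt : Nontrivial X
  swap
  · rw [minMod_of_not_nontrivial hnt, minMod_of_not_nontrivial hnt]
    norm_num
  haveI := hnt
  have hμ0 : 0 ≤ minMod S := minMod_nonneg S
  have hlow : ∀ x : X, minMod S * ‖x‖ ≤ ‖S x‖ := minMod_mul_le S
  have hge : minMod S ^ 2 ≤ minMod (S * S) := by
    apply le_minMod
    intro x hx
    have h1 := hlow x
    have h2 := hlow (S x)
    rw [hx, mul_one] at h1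
    have h3 : ‖(S * S) x‖ = ‖S (S x)‖ := by rw [ContinuousLinearMap.mul_apply]
    rw [h3]
    nlinarith [norm_nonneg (S x)]
  rcases eq_or_lt_of_le hμ0 with h0 | hpos
  · -- μ(S) = 0
    have hle0 : minMod (S * S) ≤ 0 := by
      by_contra hc
      push_neg at hc
      set ε := minMod (S * S) with hε
      have hSpos : (0:ℝ) < ‖S‖ + 1 := by positivity
      have hμlt : minMod S < ε / (‖S‖ + 1) := by
        rw [← h0]; positivity
      obtain ⟨r, hr, hrlt⟩ := exists_lt_of_csInf_lt
        (by obtain ⟨x₀, hx₀⟩ := exists_unit_vector (X := X); exact ⟨‖S x₀‖, x₀, hx₀, rfl⟩)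
        hμlt
      obtain ⟨x, hx, rfl⟩ := hr
      have hb := minMod_le (S * S) hx
      have hcomp : ‖(S * S) x‖ ≤ ‖S‖ * ‖S x‖ := by
        rw [ContinuousLinearMap.mul_apply]; exact S.le_opNorm (S x)
      have hSx0 : 0 ≤ ‖S x‖ := norm_nonneg _
      have : ‖S‖ * ‖S x‖ < ε := by
        have h10 : ‖S‖ * ‖S x‖ ≤ (‖S‖ + 1) * ‖S x‖ := by nlinarith [norm_nonneg S]
        have h11 : (‖S‖ + 1) * ‖S x‖ < (‖S‖ + 1) * (ε / (‖S‖ + 1)) :=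
          mul_lt_mul_of_pos_left hrlt hSpos
        have h12 : (‖S‖ + 1) * (ε / (‖S‖ + 1)) = ε := by field_simp
        linarith
      linarith
    have hfin := le_antisymm hle0 (minMod_nonneg (S * S))
    rw [hfin, ← h0]
    norm_num
  · -- μ(S) > 0 : S is invertible
    have hanti : AntilipschitzWith (Real.toNNReal (minMod S)⁻¹) S := by
      apply S.antilipschitz_of_bound
      intro x
      rw [Real.coe_toNNReal _ (inv_nonneg.mpr hμ0)]
      have := hlow x
      calc ‖x‖ = (minMod S)⁻¹ * (minMod S * ‖x‖) := by field_simp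
        _ ≤ (minMod S)⁻¹ * ‖S x‖ :=
            mul_le_mul_of_nonneg_left this (inv_nonneg.mpr hμ0)
    have hinj : Function.Injective S := hanti.injective
    have hker : LinearMap.ker (S : X →ₗ[ℂ] X) = ⊥ := LinearMap.ker_eq_bot.mpr hinj
    have hclosed : IsClosed (Set.range S) := hanti.isClosed_range S.uniformContinuous
    have hrange : LinearMap.range (S : X →ₗ[ℂ] X) = ⊤ := by
      by_contra hne
      set M := LinearMap.range (S : X →ₗ[ℂ] X) with hM
      haveI hMc : IsClosed (M : Set X) := by
        have : (M : Set X) = Set.range S := by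
          ext z; simp [hM, LinearMap.mem_range, Set.mem_range]
        rwa [this]
      obtain ⟨x₀, hx₀⟩ : ∃ x : X, x ∉ M := by
        by_contra hall
        push_neg at hall
        exact hne (Submodule.eq_top_iff'.mpr hall)
      have hq0 : (Submodule.Quotient.mk x₀ : X ⧸ M) ≠ 0 :=
        fun h => hx₀ ((Submodule.Quotient.mk_eq_zero M).mp h)
      obtain ⟨g, hg1, hgx⟩ := exists_dual_vector ℂ _ (norm_ne_zero_iff.mpr hq0)
      let q : X →L[ℂ] (X ⧸ M) :=
        M.mkQ.mkContinuous 1 (fun x => by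
          simpa using Submodule.Quotient.norm_mk_le (S := M) x)
      have hqapp : ∀ z : X, q z = Submodule.Quotient.mk z := fun z => rfl
      let f : X →L[ℂ] ℂ := g.comp q
      obtain ⟨y, hy⟩ := hsurj f
      have hfS : ∀ z : X, f (S z) = 0 := by
        intro z
        show g (q (S z)) = 0
        have hq : q (S z) = 0 := by
          rw [hqapp, Submodule.Quotient.mk_eq_zero]
          exact LinearMap.mem_range.mpr ⟨z, rfl⟩
        rw [hq, map_zero]
      have hJyS : J (S y) = 0 := by
        ext z
        have : J (S y) z = (J y) (S z) := by rw [hS y]; rfl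
        rw [this, hy]
        simpa using hfS z
      have hSy : S y = 0 := by
        have hn := hJnorm (S y)
        rw [hJyS, norm_zero] at hn
        exact norm_eq_zero.mp hn.symm
      have hy0 : y = 0 := hinj (by rw [hSy, map_zero])
      have hJ0 : J (0 : X) = 0 := by
        have := hJnorm (0 : X)
        rw [norm_zero] at this
        exact norm_eq_zero.mp this
      have hfx : f x₀ ≠ 0 := by
        show g (q x₀) ≠ 0
        rw [hqapp, hgx]
        simpa using Complex.ofReal_ne_zero.mpr (norm_ne_zero_iff.mpr hq0)
      apply hfx
      rw [← hy, hy0, hJ0]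
      simp
    let e := ContinuousLinearEquiv.ofBijective S hker hrange
    let A : X →L[ℂ] X := (e.symm : X →L[ℂ] X)
    have heS : ∀ z : X, e z = S z := fun z => rfl
    have hAS : ∀ z : X, A (S z) = z := fun z => by
      show e.symm (S z) = z
      rw [← heS]; exact e.symm_apply_apply z
    have hSA : ∀ z : X, S (A z) = z := fun z => by
      show S (e.symm z) = z
      rw [← heS]; exact e.apply_symm_apply z
    -- A is self-adjoint
    have hAsa : ∀ z : X, J (A z) = (J z).comp A := by
      intro z
      ext v
      have hz : S (A z) = z := hSA z
      calc J (A z) v = J (A z) (S (A v)) := by rw [hSA v]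
        _ = ((J (A z)).comp S) (A v) := rfl
        _ = J (S (A z)) (A v) := by rw [← hS (A z)]
        _ = J z (A v) := by rw [hz]
        _ = ((J z).comp A) v := rfl
    -- ‖A‖² ≤ ‖A*A‖
    have hAA : ∀ v : X, ‖A v‖ ^ 2 ≤ ‖(A * A) v‖ * ‖v‖ := by
      intro v
      have h1 : (‖A v‖ : ℂ) ^ 2 = J v (A (A v)) := by
        rw [← hJx (A v), hAsa v]; rfl
      have h2 : ‖J v (A (A v))‖ ≤ ‖v‖ * ‖A (A v)‖ := by
        have := (J v).le_opNorm (A (A v))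
        rwa [hJnorm] at this
      have h3 : ‖A v‖ ^ 2 = ‖(‖A v‖ : ℂ) ^ 2‖ := by
        rw [norm_pow, Complex.norm_real, Real.norm_eq_abs,
          abs_of_nonneg (norm_nonneg _)]
      have h4 : (A * A) v = A (A v) := by rw [ContinuousLinearMap.mul_apply]
      rw [h3, h1, h4, mul_comm ‖A (A v)‖ ‖v‖]
      exact h2
    have hnorm_sq : ‖A‖ ^ 2 ≤ ‖A * A‖ := by
      have hb : ∀ v : X, ‖A v‖ ≤ Real.sqrt ‖A * A‖ * ‖v‖ := by
        intro v
        have h5 := hAA v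
        have h6 : ‖(A * A) v‖ ≤ ‖A * A‖ * ‖v‖ := (A * A).le_opNorm v
        have h7 : ‖A v‖ ^ 2 ≤ ‖A * A‖ * ‖v‖ ^ 2 := by nlinarith [norm_nonneg v]
        have h8 : ‖A v‖ = Real.sqrt (‖A v‖ ^ 2) := (Real.sqrt_sq (norm_nonneg _)).symm
        rw [h8]
        calc Real.sqrt (‖A v‖ ^ 2) ≤ Real.sqrt (‖A * A‖ * ‖v‖ ^ 2) :=
              Real.sqrt_le_sqrt h7
          _ = Real.sqrt ‖A * A‖ * Real.sqrt (‖v‖ ^ 2) :=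
              Real.sqrt_mul (norm_nonneg _) _
          _ = Real.sqrt ‖A * A‖ * ‖v‖ := by rw [Real.sqrt_sq (norm_nonneg _)]
      have h9 : ‖A‖ ≤ Real.sqrt ‖A * A‖ :=
        ContinuousLinearMap.opNorm_le_bound _ (Real.sqrt_nonneg _) hb
      calc ‖A‖ ^ 2 ≤ Real.sqrt ‖A * A‖ ^ 2 :=
            pow_le_pow_left₀ (norm_nonneg _) h9 2
        _ = ‖A * A‖ := Real.sq_sqrt (norm_nonneg _)
    have hnorm_sq' : ‖A * A‖ ≤ ‖A‖ ^ 2 := by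
      have := norm_mul_le A A
      nlinarith [norm_nonneg A]
    have hnormAA : ‖A * A‖ = ‖A‖ ^ 2 := le_antisymm hnorm_sq' hnorm_sq
    have hApos : 0 < ‖A‖ := by
      obtain ⟨u, hu⟩ := exists_unit_vector (X := X)
      have hu0 : u ≠ 0 := fun h => by simp [h] at hu
      have hAu : A u ≠ 0 := fun h => hu0 (by rw [← hSA u, h, map_zero])
      have h10 : (0:ℝ) < ‖A u‖ := norm_pos_iff.mpr hAu
      have h11 := A.le_opNorm u
      rw [hu, mul_one] at h11
      linarith
    have e1 : minMod S = ‖A‖⁻¹ := minMod_eq_inv_norm S A hAS hSA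
    have e2 : minMod (S * S) = ‖A * A‖⁻¹ := by
      apply minMod_eq_inv_norm
      · intro z
        simp only [ContinuousLinearMap.mul_apply, hAS]
      · intro z
        simp only [ContinuousLinearMap.mul_apply, hSA]
    rw [e1, e2, hnormAA]
    rw [← inv_pow]

end Aux

/-- For a self-adjoint T, ‖Tⁿx‖² = J(x)(T^{2n}x) for every n and x;
consequently μ(Tⁿ)² = c(T^{2n}), and if X is reflexive (J surjective), then
c(T^{2n}) = μ(T^{2n}). -/
theorem norm_pow_sq_eq_and_crawford_even_power
    {X : Type*} [NormedAddCommGroup X] [NormedSpace ℂ X] [CompleteSpace X]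
    (J : X → (X →L[ℂ] ℂ))
    (hJnorm : ∀ x : X, ‖J x‖ = ‖x‖)
    (hJx : ∀ x : X, J x x = (‖x‖ : ℂ) ^ 2)
    (T : X →L[ℂ] X) (hT : IsSelfAdj J T) :
    (∀ (n : ℕ) (x : X), (‖(T ^ n) x‖ : ℂ) ^ 2 = J x ((T ^ (2 * n)) x)) ∧
    (∀ n : ℕ, (minMod (T ^ n)) ^ 2 = crawford J (T ^ (2 * n))) ∧
    (Function.Surjective J →
      ∀ n : ℕ, crawford J (T ^ (2 * n)) = minMod (T ^ (2 * n))) := by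
  have part1 : ∀ (n : ℕ) (x : X), (‖(T ^ n) x‖ : ℂ) ^ 2 = J x ((T ^ (2 * n)) x) :=
    fun n x => (key_identity hJx hT n x).symm
  have hnormJ : ∀ (n : ℕ) (x : X), ‖J x ((T ^ (2 * n)) x)‖ = ‖(T ^ n) x‖ ^ 2 := by
    intro n x
    rw [key_identity hJx hT n x, norm_pow, Complex.norm_real, Real.norm_eq_abs,
      abs_of_nonneg (norm_nonneg _)]
  have part2 : ∀ n : ℕ, (minMod (T ^ n)) ^ 2 = crawford J (T ^ (2 * n)) := by
    intro n
    set A := {r : ℝ | ∃ x : X, ‖x‖ = 1 ∧ r = ‖(T ^ n) x‖} with hA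
    have hmm : minMod (T ^ n) = sInf A := rfl
    have hCset : {r : ℝ | ∃ x : X, ‖x‖ = 1 ∧ r = ‖J x ((T ^ (2 * n)) x)‖}
        = (fun a : ℝ => a ^ 2) '' A := by
      ext r
      constructor
      · rintro ⟨x, hx, rfl⟩
        exact ⟨‖(T ^ n) x‖, ⟨x, hx, rfl⟩, (hnormJ n x).symm⟩
      · rintro ⟨a, ⟨x, hx, rfl⟩, rfl⟩
        exact ⟨x, hx, (hnormJ n x).symm⟩
    rw [crawford, hCset, hmm]
    by_cases hAne : A.Nonempty
    · have h0 : ∀ a ∈ A, 0 ≤ a := by rintro a ⟨x, -, rfl⟩; exact norm_nonneg _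
      have hbdd : BddBelow A := ⟨0, h0⟩
      have hmono : Monotone (fun a : ℝ => max a 0 ^ 2) := by
        intro a b hab
        exact pow_le_pow_left₀ (le_max_right a 0) (max_le_max hab le_rfl) 2
      have hcont : ContinuousAt (fun a : ℝ => max a 0 ^ 2) (sInf A) :=
        ((continuous_id.max continuous_const).pow 2).continuousAt
      have him := hmono.map_csInf_of_continuousAt hcont hAne hbdd
      have himg : (fun a : ℝ => max a 0 ^ 2) '' A = (fun a : ℝ => a ^ 2) '' A :=
        Set.image_congr (fun a ha => by simp only [max_eq_left (h0 a ha)])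
      rw [himg] at him
      have hinf0 : 0 ≤ sInf A := Real.sInf_nonneg h0
      rw [← him]
      simp only [max_eq_left hinf0]
    · rw [Set.not_nonempty_iff_eq_empty.mp hAne, Set.image_empty]
      simp [Real.sInf_empty]
  refine ⟨part1, part2, ?_⟩
  intro hsurj n
  rw [← part2 n]
  have h2n : T ^ (2 * n) = T ^ n * T ^ n := by rw [two_mul, pow_add]
  rw [h2n]
  exact minMod_sq_eq J hJnorm hJx hsurj (T ^ n) (isSelfAdj_pow hT n)
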